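/- arXiv:2006.12979 — 2 statements merged into one kernel-verified Lean document; each statement's English description precedes it below -/
import Mathlib

section
/- Let A be a diagonal n×n matrix with diagonal entries λ_1,…,λ_n. Then the partial derivative of ℳ_p (viewed as a function of the entries of a symmetric matrix via eigenvalue sums, equivalently of det 𝒟_A) with respect to an off-diagonal entry a_{kl} (k≠l) vanishes at A, and with respect to a diagonal entry a_{ll} equals ℳ_p(λ) · Σ_{l ∈ {k_1,…,k_p}} 1/(λ_{k_1}+⋯+λ_{k_p}), where the sum runs over all increasing p-tuples containing l, provided all p-fold eigenvalue sums are nonzero. -/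
/-!
In the basis of `⋀^p ℝⁿ` formed by the wedges `e_s` of standard basis vectors, `s` running over
the `p`-subsets of `Fin n`, the additive compound `𝒟` of a diagonal matrix `diag λ` is diagonal
with entries `λ_s = ∑_{i ∈ s} λ_i`, and the diagonal entries of `𝒟 N` are `∑_{i ∈ s} N_ii` for
any `N`. Since `𝒟` is linear in the matrix, Jacobi's formula at the invertible matrix
`diag (λ_s)` gives `d/dt det 𝒟 (diag λ + t N) = ∏_s λ_s · ∑_s λ_s⁻¹ ∑_{i ∈ s} N_ii` at `t = 0`.
An off-diagonal `N = E_kl + E_lk` has zero diagonal, while `N = E_ll` picks out the `s ∋ l`.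
-/

open ExteriorAlgebra Finset

noncomputable def wedge {M : Type*} [AddCommGroup M] [Module ℝ M] (p : ℕ)
    (v : Fin p → M) : ⋀[ℝ]^p M :=
  ⟨ιMulti ℝ p v, ιMulti_range ℝ p (Set.mem_range_self v)⟩

namespace Matrix

variable {𝕜 m : Type*} [NontriviallyNormedField 𝕜] [Fintype m] [DecidableEq m]

theorem det_one_updateRow {R : Type*} [CommRing R] (i : m) (r : m → R) :
    ((1 : Matrix m m R).updateRow i r).det = r i := by
  have h := det_updateRow_sum (1 : Matrix m m R) i r
  rw [det_one, smul_eq_mul, mul_one] at h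
  convert h
  ext j
  simp [one_apply]

open Polynomial in
theorem hasDerivAt_det_one_add_smul (M : Matrix m m 𝕜) :
    HasDerivAt (fun t : 𝕜 => (1 + t • M).det) M.trace 0 := by
  have h := (det (1 + (X : 𝕜[X]) • M.map C)).hasDerivAt 0
  rw [derivative_det_one_add_X_smul] at h
  convert h using 1
  funext t
  simp [eval_det, smul_eq_mul_diagonal]

theorem hasDerivAt_det_add_smul {A : Matrix m m 𝕜} (hA : IsUnit A.det) (M : Matrix m m 𝕜) :
    HasDerivAt (fun t : 𝕜 => (A + t • M).det) (A.det * (A⁻¹ * M).trace) 0 := by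
  have hfactor : ∀ t : 𝕜, A + t • M = A * (1 + t • (A⁻¹ * M)) := fun t => by
    rw [Matrix.mul_add, Matrix.mul_one, Matrix.mul_smul, ← Matrix.mul_assoc,
      mul_nonsing_inv _ hA, Matrix.one_mul]
  simp_rw [hfactor, det_mul]
  exact (hasDerivAt_det_one_add_smul _).const_mul _

theorem hasDerivAt_det_diagonal_add_smul {d : m → 𝕜} (hd : ∀ i, d i ≠ 0) (M : Matrix m m 𝕜) :
    HasDerivAt (fun t : 𝕜 => (diagonal d + t • M).det)
      ((∏ i, d i) * ∑ i, (d i)⁻¹ * M i i) 0 := by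
  have hA : IsUnit (diagonal d).det := by
    rw [det_diagonal, isUnit_iff_ne_zero]
    exact prod_ne_zero_iff.mpr fun i _ => hd i
  have hinv : (diagonal d)⁻¹ = diagonal fun i => (d i)⁻¹ :=
    inv_eq_left_inv (by simp [diagonal_mul_diagonal, inv_mul_cancel₀ (hd _)])
  convert hasDerivAt_det_add_smul hA M using 2
  · rw [det_diagonal]
  · simp [hinv, trace]

end Matrix

namespace Set.powersetCard

theorem sum_ofFinEmbEquiv_symm {I β : Type*} [LinearOrder I] [AddCommMonoid β] {n : ℕ}
    (s : Set.powersetCard I n) (f : I → β) :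
    ∑ i, f (ofFinEmbEquiv.symm s i) = ∑ i ∈ s.val, f i := by
  conv_rhs => rw [← map_orderEmbOfFin_univ s.val s.prop, sum_map]
  rfl

@[to_additive]
theorem prod_val {α β : Type*} [Fintype α] [CommMonoid β] {n : ℕ} (f : Finset α → β) :
    ∏ s : Set.powersetCard α n, f s.val = ∏ s ∈ Finset.powersetCard n Finset.univ, f s :=
  (prod_subtype _ (fun _ => by simp [mem_iff]) f).symm

end Set.powersetCard

namespace exteriorPower

open Set.powersetCard

variable {R M I : Type*} [CommRing R] [AddCommGroup M] [Module R M] {p : ℕ}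

/-- The `p`-th additive compound of `f`: the derivation of `⋀^p M` extending `f`, which is the
`𝒟_A` of the paper for `f = A`. -/
def IsAdditiveCompound (f : M →ₗ[R] M) (F : ⋀[R]^p M →ₗ[R] ⋀[R]^p M) : Prop :=
  ∀ v : Fin p → M, F (ιMulti R p v) = ∑ i, ιMulti R p (Function.update v i (f (v i)))

namespace IsAdditiveCompound

variable {f g : M →ₗ[R] M} {F G : ⋀[R]^p M →ₗ[R] ⋀[R]^p M}

theorem unique (hF : IsAdditiveCompound f F) (hG : IsAdditiveCompound f G) : F = G :=
  LinearMap.ext_on (ιMulti_span R p M) <| by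
    rintro _ ⟨v, rfl⟩
    rw [hF, hG]

theorem add_smul (hF : IsAdditiveCompound f F) (hG : IsAdditiveCompound g G) (c : R) :
    IsAdditiveCompound (f + c • g) (F + c • G) := by
  intro v
  simp only [LinearMap.add_apply, LinearMap.smul_apply, hF v, hG v, smul_sum,
    ← sum_add_distrib, AlternatingMap.map_update_add, AlternatingMap.map_update_smul]

variable [LinearOrder I] (b : Module.Basis I R M)

theorem apply_basis_of_apply_eq_smul (hF : IsAdditiveCompound f F) {μ : I → R}
    (hμ : ∀ i, f (b i) = μ i • b i) (s : Set.powersetCard I p) :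
    F (b.exteriorPower p s) = (∑ i ∈ s.val, μ i) • b.exteriorPower p s := by
  rw [basis_apply, ιMulti_family, hF, ← sum_ofFinEmbEquiv_symm s μ, sum_smul]
  refine sum_congr rfl fun i _ => ?_
  have hfix : Function.update (b ∘ ofFinEmbEquiv.symm s) i (b (ofFinEmbEquiv.symm s i)) =
      b ∘ ofFinEmbEquiv.symm s := Function.update_eq_self i _
  rw [Function.comp_apply, hμ, AlternatingMap.map_update_smul, hfix]

theorem basis_repr_apply_self (hF : IsAdditiveCompound f F) (s : Set.powersetCard I p) :
    (b.exteriorPower p).repr (F (b.exteriorPower p s)) s = ∑ i ∈ s.val, b.repr (f (b i)) i := by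
  rw [basis_apply, ιMulti_family, hF, map_sum, Finsupp.coe_finsetSum, Finset.sum_apply]
  simp only [basis_repr_apply, ιMultiDual_apply_ιMulti]
  rw [← sum_ofFinEmbEquiv_symm s]
  refine sum_congr rfl fun i _ => ?_
  set σ := ofFinEmbEquiv.symm s
  have hrow :
      (Matrix.of fun a c => b.coord (σ c) (Function.update (b ∘ σ) i (f ((b ∘ σ) i)) a)) =
      (1 : Matrix (Fin p) (Fin p) R).updateRow i fun c => b.repr (f (b (σ i))) (σ c) := by
    ext a c
    rcases eq_or_ne a i with rfl | hai
    · simp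
    · simp [hai, Matrix.one_apply, Finsupp.single_apply, σ.injective.eq_iff]
  rw [hrow, Matrix.det_one_updateRow]

end IsAdditiveCompound

end exteriorPower

open exteriorPower in
theorem hasDerivAt_det_additiveCompound_diagonal_add_smul {𝕜 m : Type*}
    [NontriviallyNormedField 𝕜] [Fintype m] [LinearOrder m] {p : ℕ}
    (D : Matrix m m 𝕜 → (⋀[𝕜]^p (m → 𝕜) →ₗ[𝕜] ⋀[𝕜]^p (m → 𝕜)))
    (hD : ∀ B, IsAdditiveCompound (Matrix.toLin' B) (D B)) (μ : m → 𝕜)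
    (hμ : ∀ s : Set.powersetCard m p, ∑ i ∈ s.val, μ i ≠ 0) (N : Matrix m m 𝕜) :
    HasDerivAt (fun t : 𝕜 => LinearMap.det (D (Matrix.diagonal μ + t • N)))
      ((∏ s : Set.powersetCard m p, ∑ i ∈ s.val, μ i) *
        ∑ s : Set.powersetCard m p, (∑ i ∈ s.val, μ i)⁻¹ * ∑ i ∈ s.val, N i i) 0 := by
  set b := (Pi.basisFun 𝕜 m).exteriorPower p
  have hlinear : ∀ t : 𝕜, D (Matrix.diagonal μ + t • N) = D (Matrix.diagonal μ) + t • D N := by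
    intro t
    refine (hD _).unique ?_
    rw [map_add, map_smul]
    exact (hD _).add_smul (hD N) t
  have hdiagonal : LinearMap.toMatrix b b (D (Matrix.diagonal μ)) =
      Matrix.diagonal fun s : Set.powersetCard m p => ∑ i ∈ s.val, μ i := by
    ext s t
    rw [LinearMap.toMatrix_apply, (hD _).apply_basis_of_apply_eq_smul (Pi.basisFun 𝕜 m) (μ := μ)
      (fun i => by ext; simp [Pi.single_apply]), map_smul, Module.Basis.repr_self]
    rcases eq_or_ne s t with rfl | hst
    · simp
    · simp [hst]
  have hdiag_entry : ∀ s, LinearMap.toMatrix b b (D N) s s = ∑ i ∈ s.val, N i i := by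
    intro s
    rw [LinearMap.toMatrix_apply, (hD N).basis_repr_apply_self]
    simp
  have hdet : ∀ t : 𝕜, LinearMap.det (D (Matrix.diagonal μ + t • N)) =
      (Matrix.diagonal (fun s : Set.powersetCard m p => ∑ i ∈ s.val, μ i) +
        t • LinearMap.toMatrix b b (D N)).det := by
    intro t
    rw [← LinearMap.det_toMatrix b, hlinear, map_add, map_smul, hdiagonal]
  simp_rw [hdet, ← hdiag_entry]
  exact Matrix.hasDerivAt_det_diagonal_add_smul hμ _

theorem Mp_first_derivatives_at_diagonal_general (n p : ℕ)
    (D : Matrix (Fin n) (Fin n) ℝ → (⋀[ℝ]^p (Fin n → ℝ) →ₗ[ℝ] ⋀[ℝ]^p (Fin n → ℝ)))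
    (hD : ∀ (B : Matrix (Fin n) (Fin n) ℝ) (v : Fin p → (Fin n → ℝ)),
      D B (wedge p v) = ∑ i : Fin p, wedge p (Function.update v i (B.mulVec (v i))))
    (lam : Fin n → ℝ)
    (hlam : ∀ s : Finset (Fin n), s.card = p → (∑ i ∈ s, lam i) ≠ 0) :
    (∀ k l : Fin n, k ≠ l →
      HasDerivAt (fun t : ℝ => LinearMap.det (D (Matrix.diagonal lam +
          t • (Matrix.single k l 1 + Matrix.single l k 1)))) 0 0) ∧
    (∀ l : Fin n,
      HasDerivAt (fun t : ℝ => LinearMap.det (D (Matrix.diagonal lam +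
          t • Matrix.single l l 1)))
        ((∏ s ∈ Finset.powersetCard p (Finset.univ : Finset (Fin n)), ∑ i ∈ s, lam i) *
          ∑ s ∈ (Finset.powersetCard p (Finset.univ : Finset (Fin n))).filter
              (fun s => l ∈ s), (∑ i ∈ s, lam i)⁻¹) 0) := by
  have hD' : ∀ B, exteriorPower.IsAdditiveCompound (Matrix.toLin' B) (D B) := hD
  have hderiv := hasDerivAt_det_additiveCompound_diagonal_add_smul D hD' lam
    fun s => hlam s.val s.prop
  refine ⟨fun k l hkl => (hderiv _).congr_deriv ?_, fun l => (hderiv _).congr_deriv ?_⟩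
  · have hdiag_zero :
        ∀ i, (Matrix.single k l 1 + Matrix.single l k 1 : Matrix (Fin n) (Fin n) ℝ) i i = 0 := by
      intro i
      simp only [Matrix.add_apply, Matrix.single_apply]
      grind
    simp [hdiag_zero]
  · have hdiag_sum : ∀ s : Finset (Fin n),
        ∑ i ∈ s, Matrix.single l l (1 : ℝ) i i = if l ∈ s then 1 else 0 := by
      intro s
      simp [Matrix.single_apply]
    simp only [hdiag_sum, mul_ite, mul_one, mul_zero, sum_filter]
    rw [Set.powersetCard.prod_val fun s => ∑ i ∈ s, lam i,
      Set.powersetCard.sum_val fun s => if l ∈ s then (∑ i ∈ s, lam i)⁻¹ else 0]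

/-- first derivatives of `ℳ_p = det 𝒟_•` at a diagonal matrix
`A = diag(λ₁,…,λ_n)` (all `p`-fold eigenvalue sums nonzero): the partial derivative with
respect to an off-diagonal entry `a_{kl}` (`k ≠ l`, taken in the space of symmetric
matrices) vanishes, and the partial derivative with respect to a diagonal entry `a_{ll}`
equals `ℳ_p(λ) Σ_{l ∈ {k₁,…,k_p}} 1/(λ_{k₁}+⋯+λ_{k_p})`. -/
theorem Mp_first_derivatives_at_diagonal (n p : ℕ) (hp : 1 ≤ p) (hpn : p ≤ n)
    (D : Matrix (Fin n) (Fin n) ℝ → (⋀[ℝ]^p (Fin n → ℝ) →ₗ[ℝ] ⋀[ℝ]^p (Fin n → ℝ)))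
    (hD : ∀ (B : Matrix (Fin n) (Fin n) ℝ) (v : Fin p → (Fin n → ℝ)),
      D B (wedge p v) = ∑ i : Fin p, wedge p (Function.update v i (B.mulVec (v i))))
    (lam : Fin n → ℝ)
    (hlam : ∀ s : Finset (Fin n), s.card = p → (∑ i ∈ s, lam i) ≠ 0) :
    (∀ k l : Fin n, k ≠ l →
      HasDerivAt (fun t : ℝ => LinearMap.det (D (Matrix.diagonal lam +
          t • (Matrix.single k l 1 + Matrix.single l k 1)))) 0 0) ∧
    (∀ l : Fin n,
      HasDerivAt (fun t : ℝ => LinearMap.det (D (Matrix.diagonal lam +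
          t • Matrix.single l l 1)))
        ((∏ s ∈ Finset.powersetCard p (Finset.univ : Finset (Fin n)), ∑ i ∈ s, lam i) *
          ∑ s ∈ (Finset.powersetCard p (Finset.univ : Finset (Fin n))).filter
              (fun s => l ∈ s), (∑ i ∈ s, lam i)⁻¹) 0) :=
  Mp_first_derivatives_at_diagonal_general n p D hD lam hlam
end

section
/- Let λ ∈ 𝒫_p with coordinates ordered decreasingly λ_1 ≥ … ≥ λ_n, and let j satisfy j ≥ n−p+1. Then there is a constant θ = θ(n,p) > 0 (independent of λ) such that Σ_{j ∈ {k_1,…,k_p}} 1/(λ_{k_1}+⋯+λ_{k_p}) ≥ θ · Σ_{l=1}^n Σ_{l ∈ {k_1,…,k_p}} 1/(λ_{k_1}+⋯+λ_{k_p}). Equivalently ℳ_p^{jj}(λ) ≥ θ Σ_l ℳ_p^{ll}(λ). -/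
/-!
For decreasing `λ` the last `p` indices `T = {n-p, …, n-1}` give the smallest `p`-fold sum
(any `p`-set `s` is exchanged into `T` by trading indices of `s \ T` for the larger ones of
`T \ s`), so `1/λ_T` bounds every term, and `T` contains `j`. Double counting gives
`Σ_l Σ_{s ∋ l} 1/λ_s = p Σ_s 1/λ_s ≤ p · C(n,p) / λ_T`, hence `θ = 1/(p · C(n,p))` works.
-/

open Finset

theorem Finset.sum_le_sum_of_card_eq_of_forall_le {ι α : Type*} [AddCommMonoid α] [LinearOrder α]
    [IsOrderedAddMonoid α] {s t : Finset ι} {f : ι → α} (hcard : #s = #t)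
    (h : ∀ i ∈ s, ∀ j ∈ t, f i ≤ f j) : ∑ i ∈ s, f i ≤ ∑ j ∈ t, f j := by
  obtain rfl | ht := t.eq_empty_or_nonempty
  · simp_all
  obtain ⟨j₀, hj₀, hmin⟩ := t.exists_min_image f ht
  calc ∑ i ∈ s, f i ≤ #s • f j₀ := sum_le_card_nsmul _ _ _ fun i hi ↦ h i hi j₀ hj₀
    _ = #t • f j₀ := by rw [hcard]
    _ ≤ ∑ j ∈ t, f j := card_nsmul_le_sum _ _ _ hmin

theorem Antitone.sum_Ici_le_sum {ι α : Type*} [LinearOrder ι] [LocallyFiniteOrderTop ι]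
    [AddCommMonoid α] [LinearOrder α] [IsOrderedCancelAddMonoid α] {f : ι → α}
    (hf : Antitone f) (a : ι) {s : Finset ι} (hs : #s = #(Ici a)) :
    ∑ i ∈ Ici a, f i ≤ ∑ i ∈ s, f i := by
  classical
  rw [← sum_sdiff_le_sum_sdiff]
  refine sum_le_sum_of_card_eq_of_forall_le (card_sdiff_comm hs.symm) fun i hi j hj ↦ hf ?_
  simp only [mem_sdiff, mem_Ici, not_le] at hi hj
  exact hj.2.le.trans hi.1

theorem Finset.sum_sum_filter_mem {ι M : Type*} [Fintype ι] [DecidableEq ι] [AddCommMonoid M]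
    (P : Finset (Finset ι)) (g : Finset ι → M) :
    ∑ l, ∑ s ∈ P with l ∈ s, g s = ∑ s ∈ P, #s • g s := by
  simp_rw [sum_filter]
  rw [sum_comm]
  simp [sum_ite_mem]

/-- there is `θ = θ(n,p) > 0` such that for every decreasingly ordered
`λ ∈ 𝒫_p` and every index `j` with `j ≥ n - p + 1` (in 1-based numbering),
`Σ_{j ∈ {k₁,…,k_p}} 1/(λ_{k₁}+⋯+λ_{k_p}) ≥ θ · Σ_{l=1}^n Σ_{l ∈ {k₁,…,k_p}} 1/(λ_{k₁}+⋯+λ_{k_p})`,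
i.e. `ℳ_p^{jj}(λ) ≥ θ Σ_l ℳ_p^{ll}(λ)`. -/
theorem Mp_jj_dominates_trace (n p : ℕ) (hp : 1 ≤ p) (hpn : p ≤ n) :
    ∃ θ : ℝ, 0 < θ ∧
      ∀ lam : Fin n → ℝ, (∀ i j : Fin n, i ≤ j → lam j ≤ lam i) →
        (∀ s : Finset (Fin n), s.card = p → 0 < ∑ i ∈ s, lam i) →
        ∀ j : Fin n, n - p ≤ j.val →
          θ * ∑ l : Fin n,
              ∑ s ∈ (Finset.powersetCard p (Finset.univ : Finset (Fin n))).filter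
                  (fun s => l ∈ s), (∑ i ∈ s, lam i)⁻¹ ≤
            ∑ s ∈ (Finset.powersetCard p (Finset.univ : Finset (Fin n))).filter
                (fun s => j ∈ s), (∑ i ∈ s, lam i)⁻¹ := by
  have hchoose : 0 < n.choose p := Nat.choose_pos hpn
  refine ⟨((p : ℝ) * n.choose p)⁻¹, by positivity, fun lam hanti hpos j hj ↦ ?_⟩
  set P := powersetCard p (univ : Finset (Fin n))
  set T := Ici (⟨n - p, by omega⟩ : Fin n)
  set M := (∑ i ∈ T, lam i)⁻¹
  have hTcard : #T = p := by simp only [T, Fin.card_Ici]; omega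
  have hmax : ∀ s ∈ P, (∑ i ∈ s, lam i)⁻¹ ≤ M := fun s hs ↦
    inv_anti₀ (hpos T hTcard) <| Antitone.sum_Ici_le_sum (fun a b ↦ hanti a b) _
      ((mem_powersetCard.1 hs).2.trans hTcard.symm)
  have hM : M ≤ ∑ s ∈ P with j ∈ s, (∑ i ∈ s, lam i)⁻¹ :=
    single_le_sum (fun s hs ↦ (inv_pos.2 (hpos s (mem_powersetCard.1 (mem_filter.1 hs).1).2)).le)
      (mem_filter.2 ⟨mem_powersetCard.2 ⟨subset_univ _, hTcard⟩, mem_Ici.2 (Fin.le_def.2 hj)⟩)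
  have htrace : ∑ l, ∑ s ∈ P with l ∈ s, (∑ i ∈ s, lam i)⁻¹ ≤ p * n.choose p * M :=
    calc ∑ l, ∑ s ∈ P with l ∈ s, (∑ i ∈ s, lam i)⁻¹
        = p • ∑ s ∈ P, (∑ i ∈ s, lam i)⁻¹ := by
          rw [sum_sum_filter_mem, smul_sum]
          exact sum_congr rfl fun s hs ↦ by rw [(mem_powersetCard.1 hs).2]
      _ ≤ p • (#P • M) := by gcongr; exact sum_le_card_nsmul _ _ _ hmax
      _ = p * n.choose p * M := by simp [P, nsmul_eq_mul, mul_assoc]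
  calc _ ≤ ((p : ℝ) * n.choose p)⁻¹ * (p * n.choose p * M) := by gcongr
    _ = M := by field_simp
    _ ≤ _ := hM
end
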